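/- For an integer k ≥ 3, let U_k be the family of 2k subsets K_{k,±i} (i ∈ [k]) of [±(k+1)] as above. Then for every subfamily T ⊆ U_k with 2 ≤ |T| ≤ k + 1, the inequality |T| + k < |∪_{L∈T} L| holds. -/

import Mathlib

/-- `[±t] = {-t,...,-1,1,...,t} ⊆ ℤ`. -/
noncomputable def pmSet (t : ℕ) : Finset ℤ := (Finset.Icc (-(t : ℤ)) t).erase 0

/-- `K_{k,i} = ([k+1] \ {i}) ∪ {-i}` for `i ∈ [k]`, and
`K_{k,-i} = [±(k+1)] \ K_{k,i}` for `i ∈ [k]`. -/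
noncomputable def Kset (k : ℕ) (i : ℤ) : Finset ℤ :=
  if 0 < i then ((Finset.Icc (1 : ℤ) (k + 1)).erase i) ∪ {-i}
  else pmSet (k + 1) \ (((Finset.Icc (1 : ℤ) (k + 1)).erase (-i)) ∪ {i})

/-- The family `U_k` of the `2k` sets `K_{k,±i}`, `i ∈ [k]`. -/
noncomputable def Ufamily (k : ℕ) : Finset (Finset ℤ) := (pmSet k).image (Kset k)

/-! Since `K_{k,-i} = -K_{k,i}`, the union `U` of the sets indexed by `S ⊆ [±k]` satisfies
`U(-S) = -U(S)`, so it suffices to bound the positive half of `U` from below and mirror the bound.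
Let `p`, `n` be the numbers of positive and negative indices in `S`. The set `U` contains `-i` for
every negative index `i`, so it has at least `n` positive elements; a positive index `i` adds
`[k+1] \ {i}`, giving at least `k` of them and at least `n + 1` (the element `k + 1` is not of the
form `-i`); two positive indices cover all of `[k+1]`. Adding these bounds to their mirror images
gives `|U| > p + n + k` whenever `2 ≤ p + n ≤ k + 1`; only the case `p = n = 1` needs `k ≥ 3`. -/

open Finset Pointwise

lemma mem_pmSet {t : ℕ} {x : ℤ} : x ∈ pmSet t ↔ x ≠ 0 ∧ -(t : ℤ) ≤ x ∧ x ≤ t := by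
  simp [pmSet]

lemma neg_pmSet (t : ℕ) : -pmSet t = pmSet t := by
  ext x
  simp only [mem_neg', mem_pmSet]
  omega

def positives (s : Finset ℤ) : Finset ℤ := s.filter (0 < ·)

def negatives (s : Finset ℤ) : Finset ℤ := s.filter (· < 0)

lemma card_positives_neg (s : Finset ℤ) : #(positives (-s)) = #(negatives s) := by
  rw [← card_neg (negatives s), negatives, neg_filter]
  simp [positives]

lemma card_negatives_neg (s : Finset ℤ) : #(negatives (-s)) = #(positives s) := by
  rw [← card_neg (positives s), positives, neg_filter]
  simp [negatives]

lemma card_eq_card_positives_add_card_negatives {s : Finset ℤ} (hs : (0 : ℤ) ∉ s) :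
    #s = #(positives s) + #(negatives s) := by
  rw [← card_filter_add_card_filter_not (s := s) (0 < ·), positives, negatives]
  congr 2
  refine filter_congr fun x hx => ?_
  have : x ≠ 0 := ne_of_mem_of_not_mem hx hs
  omega

section

variable {k : ℕ}

lemma mem_Kset {i x : ℤ} (hi : i ∈ pmSet k) :
    x ∈ Kset k i ↔ (0 < i ∧ ((1 ≤ x ∧ x ≤ k + 1 ∧ x ≠ i) ∨ x = -i)) ∨
      (i < 0 ∧ ((-(k : ℤ) - 1 ≤ x ∧ x ≤ -1 ∧ x ≠ i) ∨ x = -i)) := by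
  rw [mem_pmSet] at hi
  unfold Kset
  split_ifs
  · simp only [mem_union, mem_singleton, mem_erase, mem_Icc]
    omega
  · simp only [mem_sdiff, mem_pmSet, mem_union, mem_singleton, mem_erase, mem_Icc]
    omega

lemma Kset_neg {i : ℤ} (hi : i ∈ pmSet k) : Kset k (-i) = -Kset k i := by
  have hi' : -i ∈ pmSet k := by rw [mem_pmSet] at *; omega
  ext x
  rw [mem_neg', mem_Kset hi, mem_Kset hi']
  omega

-- `k + 1 ∈ K_i` detects the sign of `i`, and then `-i ∈ K_j` forces `j = i`.
lemma Kset_injOn : Set.InjOn (Kset k) (pmSet k) := by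
  intro i hi j hj h
  have key : ∀ x, x ∈ Kset k i ↔ x ∈ Kset k j := by simp [h]
  have h1 := key (k + 1)
  have h2 := key (-i)
  rw [mem_Kset hi, mem_Kset hj] at h1 h2
  have := mem_pmSet.1 hi
  have := mem_pmSet.1 hj
  omega

end

section

variable {k : ℕ} {S : Finset ℤ} (hS : S ⊆ pmSet k)
include hS

lemma zero_notMem_biUnion_Kset : (0 : ℤ) ∉ S.biUnion (Kset k) := by
  simp only [mem_biUnion, not_exists, not_and]
  intro i hi
  rw [mem_Kset (hS hi)]
  have := mem_pmSet.1 (hS hi)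
  omega

lemma biUnion_Kset_neg : (-S).biUnion (Kset k) = -S.biUnion (Kset k) := by
  ext x
  simp only [mem_biUnion, mem_neg']
  constructor
  · rintro ⟨i, hi, hx⟩
    exact ⟨-i, hi, by rwa [← neg_neg i, Kset_neg (hS hi), mem_neg'] at hx⟩
  · rintro ⟨i, hi, hx⟩
    exact ⟨-i, by rwa [neg_neg], by rwa [Kset_neg (hS hi), mem_neg']⟩

lemma neg_mem_biUnion_Kset {i : ℤ} (hi : i ∈ S) : -i ∈ S.biUnion (Kset k) := by
  refine mem_biUnion.2 ⟨i, hi, ?_⟩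
  rw [mem_Kset (hS hi)]
  have := mem_pmSet.1 (hS hi)
  omega

lemma mem_biUnion_Kset_of_pos {i x : ℤ} (hi : i ∈ S) (hi0 : 0 < i) (hx : x ∈ Icc 1 ((k : ℤ) + 1))
    (hxi : x ≠ i) : x ∈ S.biUnion (Kset k) := by
  refine mem_biUnion.2 ⟨i, hi, ?_⟩
  rw [mem_Kset (hS hi)]
  rw [mem_Icc] at hx
  omega

lemma neg_negatives_subset_positives_biUnion_Kset :
    -negatives S ⊆ positives (S.biUnion (Kset k)) := by
  intro x hx
  rw [mem_neg', negatives, mem_filter] at hx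
  rw [positives, mem_filter, ← neg_neg x]
  exact ⟨neg_mem_biUnion_Kset hS hx.1, by omega⟩

lemma card_negatives_le_card_positives_biUnion_Kset :
    #(negatives S) ≤ #(positives (S.biUnion (Kset k))) := by
  simpa using card_le_card (neg_negatives_subset_positives_biUnion_Kset hS)

lemma card_negatives_lt_card_positives_biUnion_Kset (hP : 0 < #(positives S)) :
    #(negatives S) < #(positives (S.biUnion (Kset k))) := by
  obtain ⟨i, hi⟩ := card_pos.1 hP
  rw [positives, mem_filter] at hi
  have hi' := mem_pmSet.1 (hS hi.1)
  have htop : (k : ℤ) + 1 ∉ -negatives S := by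
    rw [mem_neg', negatives, mem_filter]
    intro h
    have := mem_pmSet.1 (hS h.1)
    omega
  have hsub : insert ((k : ℤ) + 1) (-negatives S) ⊆ positives (S.biUnion (Kset k)) := by
    refine insert_subset ?_ (neg_negatives_subset_positives_biUnion_Kset hS)
    rw [positives, mem_filter]
    exact ⟨mem_biUnion_Kset_of_pos hS hi.1 hi.2 (by rw [mem_Icc]; omega) (by omega), by omega⟩
  simpa [card_insert_of_notMem htop] using card_le_card hsub

lemma le_card_positives_biUnion_Kset (hP : 0 < #(positives S)) :
    k ≤ #(positives (S.biUnion (Kset k))) := by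
  obtain ⟨i, hi⟩ := card_pos.1 hP
  rw [positives, mem_filter] at hi
  have hi' := mem_pmSet.1 (hS hi.1)
  have hsub : (Icc 1 ((k : ℤ) + 1)).erase i ⊆ positives (S.biUnion (Kset k)) := by
    intro x hx
    rw [mem_erase] at hx
    rw [positives, mem_filter]
    exact ⟨mem_biUnion_Kset_of_pos hS hi.1 hi.2 hx.2 hx.1, by rw [mem_Icc] at hx; omega⟩
  have := card_le_card hsub
  rw [card_erase_of_mem (by rw [mem_Icc]; omega), Int.card_Icc] at this
  omega

lemma succ_le_card_positives_biUnion_Kset (hP : 1 < #(positives S)) :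
    k + 1 ≤ #(positives (S.biUnion (Kset k))) := by
  obtain ⟨i, hi, j, hj, hij⟩ := one_lt_card.1 hP
  rw [positives, mem_filter] at hi hj
  have hsub : Icc 1 ((k : ℤ) + 1) ⊆ positives (S.biUnion (Kset k)) := by
    intro x hx
    rw [positives, mem_filter]
    refine ⟨?_, by rw [mem_Icc] at hx; omega⟩
    by_cases hxi : x = i
    · exact mem_biUnion_Kset_of_pos hS hj.1 hj.2 hx (hxi ▸ hij)
    · exact mem_biUnion_Kset_of_pos hS hi.1 hi.2 hx hxi
  simpa using card_le_card hsub

end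

lemma card_add_lt_card_biUnion_Kset {k : ℕ} (hk : 3 ≤ k) {S : Finset ℤ} (hS : S ⊆ pmSet k)
    (h2 : 2 ≤ #S) (hk1 : #S ≤ k + 1) : #S + k < #(S.biUnion (Kset k)) := by
  have hS' : -S ⊆ pmSet k := neg_pmSet k ▸ neg_subset_neg hS
  have hS_split := card_eq_card_positives_add_card_negatives fun h => (mem_pmSet.1 (hS h)).1 rfl
  have hU_split := card_eq_card_positives_add_card_negatives (zero_notMem_biUnion_Kset hS)
  have hpos₁ := card_negatives_le_card_positives_biUnion_Kset hS
  have hpos₂ := card_negatives_lt_card_positives_biUnion_Kset hS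
  have hpos₃ := le_card_positives_biUnion_Kset hS
  have hpos₄ := succ_le_card_positives_biUnion_Kset hS
  have hneg₁ := card_negatives_le_card_positives_biUnion_Kset hS'
  have hneg₂ := card_negatives_lt_card_positives_biUnion_Kset hS'
  have hneg₃ := le_card_positives_biUnion_Kset hS'
  have hneg₄ := succ_le_card_positives_biUnion_Kset hS'
  simp only [biUnion_Kset_neg hS, card_positives_neg, card_negatives_neg] at hneg₁ hneg₂ hneg₃ hneg₄
  omega

/-- Fact 2: every subfamily `T ⊆ U_k` with `2 ≤ |T| ≤ k+1`
satisfies `|T| + k < |⋃_{L ∈ T} L|`. -/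
theorem Ufamily_BBA_strict (k : ℕ) (hk : 3 ≤ k)
    (T : Finset (Finset ℤ)) (hT : T ⊆ Ufamily k)
    (h2 : 2 ≤ T.card) (hk1 : T.card ≤ k + 1) :
    T.card + k < (T.biUnion id).card := by
  obtain ⟨S, hS, rfl⟩ := subset_image_iff.1 hT
  have hcard : #(S.image (Kset k)) = #S := card_image_of_injOn (Kset_injOn.mono hS)
  rw [hcard] at h2 hk1 ⊢
  simpa [image_biUnion] using card_add_lt_card_biUnion_Kset hk hS h2 hk1
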